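/- arXiv:2310.07808 — 2 statements merged into one kernel-verified Lean document; each statement's English description precedes it below -/
import Mathlib

section
/- Let M ≥ 1 be an integer and let f : [0,1] → ℝ be M times continuously differentiable with sup_{ξ∈[0,1]} |f^{(M)}(ξ)| ≤ M̃ for some real number M̃. Then there exist real coefficients c_0, …, c_{M−1} such that (∫_0^1 (f(ζ) − Σ_{m=0}^{M−1} c_m B_m(ζ))² dζ)^{1/2} ≤ M̃ / (M! · 2^{2M−1}). -/
/-!
Interpolate `f` at the `M` Chebyshev nodes moved to `[0, 1]`. By Rolle's theorem applied `M`
times, the interpolation error at `x` is `f⁽ᴹ⁾(ξ) / M! · ∏ₖ (x - xₖ)`, and the nodal polynomial is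
`2^(-M) · 2^(1-M) · T_M(2x - 1)`, so the error is at most `M̃ / (M! · 2^(2M-1))` on all of `[0, 1]`,
hence also in `L²[0, 1]`. The interpolant has degree `< M`, and the Bernoulli polynomials
`B_0, …, B_{M-1}` are monic of degrees `0, …, M-1`, so they span it.
-/

open Polynomial Set Real

namespace Polynomial

theorem natDegree_bernoulli_le (n : ℕ) : (bernoulli n).natDegree ≤ n :=
  natDegree_le_iff_coeff_eq_zero.mpr fun i hi => by
    rw [coeff_bernoulli, if_neg (by exact_mod_cast hi.not_ge)]

theorem monic_bernoulli (n : ℕ) : (bernoulli n).Monic :=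
  monic_of_natDegree_le_of_coeff_eq_one n (natDegree_bernoulli_le n) (by simp [coeff_bernoulli])

theorem natDegree_bernoulli (n : ℕ) : (bernoulli n).natDegree = n :=
  natDegree_eq_of_le_of_coeff_ne_zero (natDegree_bernoulli_le n) (by simp [coeff_bernoulli])

noncomputable def bernoulliSequence : Sequence ℝ where
  elems' n := (bernoulli n).map (algebraMap ℚ ℝ)
  degree_eq' n := by
    rw [degree_map, degree_eq_natDegree (monic_bernoulli n).ne_zero, natDegree_bernoulli]

theorem exists_eval_eq_sum_bernoulli {M : ℕ} {p : ℝ[X]} (hp : p.degree < M) :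
    ∃ c : ℕ → ℝ, ∀ x, p.eval x =
      ∑ m ∈ Finset.range M, c m * ((bernoulli m).map (algebraMap ℚ ℝ)).eval x := by
  have hmem : p ∈ degreeLT ℝ M := mem_degreeLT.mpr hp
  rw [← bernoulliSequence.span_degreeLT fun i _ => ?_, show Iio M = Finset.range M by simp,
    Submodule.mem_span_image_finset_iff_exists_fun'] at hmem
  · obtain ⟨c, rfl⟩ := hmem
    exact ⟨c, fun x => by simp [eval_finsetSum, bernoulliSequence]⟩
  · simp [bernoulliSequence, ((monic_bernoulli i).map (algebraMap ℚ ℝ)).leadingCoeff]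

theorem iteratedDeriv_eval {𝕜 : Type*} [NontriviallyNormedField 𝕜] (n : ℕ) (p : 𝕜[X]) :
    iteratedDeriv n (fun x => p.eval x) = fun x => (derivative^[n] p).eval x := by
  rw [iteratedDeriv_eq_iterate]
  induction n with
  | zero => rfl
  | succ n ih =>
    rw [Function.iterate_succ_apply', ih, Function.iterate_succ_apply']
    funext x
    exact Polynomial.deriv _

theorem iteratedDerivWithin_eval_of_natDegree_le {𝕜 : Type*} [NontriviallyNormedField 𝕜]
    {s : Set 𝕜} (hs : UniqueDiffOn 𝕜 s) {x : 𝕜} (hx : x ∈ s) {n : ℕ} {p : 𝕜[X]}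
    (hp : p.natDegree ≤ n) :
    iteratedDerivWithin n (fun t => p.eval t) s x = n.factorial * p.coeff n := by
  have hp' : ContDiff 𝕜 n fun t => p.eval t := by simpa using p.contDiff_aeval (𝕜 := 𝕜) n
  rw [iteratedDerivWithin_eq_iteratedDeriv hs hp'.contDiffAt hx, iteratedDeriv_eval,
    eq_C_of_natDegree_le_zero ((natDegree_iterate_derivative p n).trans (by omega))]
  simp [coeff_iterate_derivative, Nat.descFactorial_self]

end Polynomial

namespace Polynomial.Chebyshev

noncomputable def rootT (n k : ℕ) : ℝ := cos ((2 * k + 1) * π / (2 * n))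

theorem injOn_rootT (n : ℕ) : InjOn (rootT n) (Finset.range n) :=
  (Finset.range n).nodup_map_iff_injOn.mp (roots_T_real_nodup n)

theorem T_real_eq_C_mul_nodal (n : ℕ) :
    T ℝ n = Polynomial.C (2 ^ (n - 1)) * Lagrange.nodal (Finset.range n) (rootT n) := by
  have hroots : (T ℝ n).roots = ((Finset.range n).image (rootT n)).val := roots_T_real n
  have hcard : Multiset.card (T ℝ n).roots = (T ℝ n).natDegree := by
    rw [hroots, Finset.card_val, Finset.card_image_of_injOn (injOn_rootT n)]
    simp
  conv_lhs => rw [← C_leadingCoeff_mul_prod_multiset_X_sub_C hcard]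
  rw [hroots, leadingCoeff_T, Lagrange.nodal, ← Finset.prod_eq_multiset_prod,
    Finset.prod_image (injOn_rootT n)]
  simp

theorem abs_eval_nodal_rootT_le (n : ℕ) {y : ℝ} (hy : |y| ≤ 1) :
    |(Lagrange.nodal (Finset.range n) (rootT n)).eval y| ≤ 1 / 2 ^ (n - 1) := by
  have h := abs_eval_T_real_le_one n hy
  rw [T_real_eq_C_mul_nodal, eval_mul, eval_C, abs_mul, abs_of_pos (by positivity)] at h
  rw [le_div_iff₀ (by positivity)]
  linarith

end Polynomial.Chebyshev

open Polynomial.Chebyshev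

noncomputable def shiftedChebyshevNode (n k : ℕ) : ℝ := (1 + rootT n k) / 2

theorem shiftedChebyshevNode_mem_Icc (n k : ℕ) : shiftedChebyshevNode n k ∈ Icc 0 1 := by
  have h₁ := neg_one_le_cos ((2 * k + 1) * π / (2 * n))
  have h₂ := cos_le_one ((2 * k + 1) * π / (2 * n))
  constructor <;> (unfold shiftedChebyshevNode rootT; linarith)

theorem injOn_shiftedChebyshevNode (n : ℕ) : InjOn (shiftedChebyshevNode n) (Finset.range n) :=
  fun _ hi _ hj h => injOn_rootT n hi hj (by simpa [shiftedChebyshevNode] using h)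

theorem abs_eval_nodal_shiftedChebyshevNode_le (n : ℕ) {x : ℝ} (hx : x ∈ Icc 0 1) :
    |(Lagrange.nodal (Finset.range n) (shiftedChebyshevNode n)).eval x|
      ≤ 1 / 2 ^ (2 * n - 1) := by
  have hscale : (Lagrange.nodal (Finset.range n) (shiftedChebyshevNode n)).eval x =
      (1 / 2) ^ n * (Lagrange.nodal (Finset.range n) (rootT n)).eval (2 * x - 1) := by
    rw [Lagrange.eval_nodal, Lagrange.eval_nodal, ← Finset.card_range n, ← Finset.prod_const,
      Finset.card_range, ← Finset.prod_mul_distrib]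
    exact Finset.prod_congr rfl fun k _ => by unfold shiftedChebyshevNode; ring
  have hy : |2 * x - 1| ≤ 1 := abs_le.mpr ⟨by linarith [hx.1], by linarith [hx.2]⟩
  have hpow : (2 : ℝ) ^ (2 * n - 1) = 2 ^ n * 2 ^ (n - 1) := by rw [← pow_add]; congr 1; omega
  rw [hscale, abs_mul, abs_of_pos (by positivity), hpow, one_div_pow, ← one_div_mul_one_div]
  gcongr
  exact abs_eval_nodal_rootT_le n hy

theorem exists_derivWithin_eq_zero_of_eq {a b p q : ℝ} {g : ℝ → ℝ}
    (hg : DifferentiableOn ℝ g (Icc a b)) (hp : a ≤ p) (hpq : p < q) (hq : q ≤ b)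
    (hgpq : g p = g q) : ∃ y ∈ Ioo p q, derivWithin g (Icc a b) y = 0 := by
  have hsub : Icc p q ⊆ Icc a b := Icc_subset_Icc hp hq
  refine exists_hasDerivAt_eq_zero hpq (hg.continuousOn.mono hsub) hgpq fun y hy => ?_
  have hnhds : Icc a b ∈ nhds y := Icc_mem_nhds (hp.trans_lt hy.1) (hy.2.trans_le hq)
  exact (hg y (hsub (Ioo_subset_Icc_self hy))).hasDerivWithinAt.hasDerivAt hnhds

theorem exists_iteratedDerivWithin_eq_zero {a b : ℝ} (hab : a < b) :
    ∀ {n : ℕ} {g : ℝ → ℝ}, ContDiffOn ℝ n g (Icc a b) → ∀ {x : Fin (n + 1) → ℝ}, StrictMono x →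
      (∀ i, x i ∈ Icc a b) → (∀ i, g (x i) = 0) →
      ∃ ξ ∈ Icc a b, iteratedDerivWithin n g (Icc a b) ξ = 0
  | 0, _, _, x, _, hxI, hgx => ⟨x 0, hxI 0, by simpa using hgx 0⟩
  | n + 1, g, hg, x, hx, hxI, hgx => by
    have hstep (i : Fin (n + 1)) :
        ∃ y ∈ Ioo (x i.castSucc) (x i.succ), derivWithin g (Icc a b) y = 0 :=
      exists_derivWithin_eq_zero_of_eq (hg.differentiableOn (by simp)) (hxI _).1
        (hx Fin.castSucc_lt_succ) (hxI _).2 ((hgx _).trans (hgx _).symm)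
    choose y hy hy0 using hstep
    have hymono : StrictMono y := fun i j hij =>
      (hy i).2.trans <| (hx.monotone (Fin.succ_le_castSucc_iff.mpr hij)).trans_lt (hy j).1
    have hyI (i : Fin (n + 1)) : y i ∈ Icc a b :=
      ⟨(hxI _).1.trans (hy i).1.le, (hy i).2.le.trans (hxI _).2⟩
    have hg' : ContDiffOn ℝ n (derivWithin g (Icc a b)) (Icc a b) :=
      hg.derivWithin (uniqueDiffOn_Icc hab) (by simp)
    simpa only [iteratedDerivWithin_succ'] using
      exists_iteratedDerivWithin_eq_zero hab hg' hymono hyI hy0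

theorem exists_iteratedDerivWithin_eq_zero_of_card {a b : ℝ} (hab : a < b) {n : ℕ}
    {g : ℝ → ℝ} (hg : ContDiffOn ℝ n g (Icc a b)) {z : Finset ℝ} (hz : z.card = n + 1)
    (hzI : ↑z ⊆ Icc a b) (hgz : ∀ t ∈ z, g t = 0) :
    ∃ ξ ∈ Icc a b, iteratedDerivWithin n g (Icc a b) ξ = 0 :=
  exists_iteratedDerivWithin_eq_zero hab hg (z.orderEmbOfFin hz).strictMono
    (fun i => hzI (z.orderEmbOfFin_mem hz i)) (fun i => hgz _ (z.orderEmbOfFin_mem hz i))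

namespace Lagrange

variable {ι : Type*} [DecidableEq ι] {s : Finset ι} {v : ι → ℝ}

theorem natDegree_interpolate_add_C_mul_nodal_le (hv : InjOn v s) (r : ι → ℝ) (c : ℝ) :
    (interpolate s v r + C c * nodal s v).natDegree ≤ s.card :=
  natDegree_add_le_of_degree_le (natDegree_le_of_degree_le (degree_interpolate_lt r hv).le)
    ((natDegree_C_mul_le c _).trans natDegree_nodal.le)

theorem coeff_interpolate_add_C_mul_nodal (hv : InjOn v s) (r : ι → ℝ) (c : ℝ) :
    (interpolate s v r + C c * nodal s v).coeff s.card = c := by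
  rw [coeff_add, coeff_C_mul, coeff_eq_zero_of_degree_lt (degree_interpolate_lt r hv), zero_add,
    ← natDegree_nodal (s := s) (v := v), ← leadingCoeff, nodal_monic.leadingCoeff, mul_one]

theorem exists_sub_eval_interpolate_eq {a b : ℝ} (hab : a < b) (hv : InjOn v s)
    (hvI : ∀ i ∈ s, v i ∈ Icc a b) {f : ℝ → ℝ} (hf : ContDiffOn ℝ s.card f (Icc a b)) {x : ℝ}
    (hx : x ∈ Icc a b) :
    ∃ ξ ∈ Icc a b, f x - (interpolate s v (fun i => f (v i))).eval x =
      iteratedDerivWithin s.card f (Icc a b) ξ / s.card.factorial * (nodal s v).eval x := by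
  set P := interpolate s v (fun i => f (v i))
  have hP (i) (hi : i ∈ s) : P.eval (v i) = f (v i) := eval_interpolate_at_node _ hv hi
  by_cases hnode : ∃ i ∈ s, x = v i
  · obtain ⟨i, hi, rfl⟩ := hnode
    exact ⟨v i, hx, by simp [hP i hi, eval_nodal_at_node hi]⟩
  push Not at hnode
  have hW : (nodal s v).eval x ≠ 0 := eval_nodal_not_at_node hnode
  -- `c` is chosen so that `f - R` vanishes at `x` as well as at the nodes.
  set c := (f x - P.eval x) / (nodal s v).eval x
  set R := P + C c * nodal s v
  have hR : ContDiffOn ℝ s.card (fun t => R.eval t) (Icc a b) := by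
    simpa using (R.contDiff_aeval (𝕜 := ℝ) s.card).contDiffOn
  have hzeros : ∀ t ∈ insert x (s.image v), f t - R.eval t = 0 := by
    simp only [Finset.mem_insert, Finset.mem_image]
    rintro t (rfl | ⟨i, hi, rfl⟩)
    · simp [R, c, div_mul_cancel₀ _ hW]
    · simp [R, hP i hi, eval_nodal_at_node hi]
  have hcard : (insert x (s.image v)).card = s.card + 1 := by
    rw [Finset.card_insert_of_notMem (by simpa using fun i hi => (hnode i hi).symm),
      Finset.card_image_of_injOn hv]
  have hsub : ↑(insert x (s.image v)) ⊆ Icc a b := by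
    rw [Finset.coe_insert, Finset.coe_image, insert_subset_iff, image_subset_iff]
    exact ⟨hx, hvI⟩
  obtain ⟨ξ, hξ, hξ0⟩ :=
    exists_iteratedDerivWithin_eq_zero_of_card hab (hf.sub hR) hcard hsub hzeros
  refine ⟨ξ, hξ, ?_⟩
  have hsplit := iteratedDerivWithin_sub hξ (uniqueDiffOn_Icc hab) (hf ξ hξ) (hR ξ hξ)
  rw [iteratedDerivWithin_eval_of_natDegree_le (uniqueDiffOn_Icc hab) hξ
      (natDegree_interpolate_add_C_mul_nodal_le hv _ c),
    coeff_interpolate_add_C_mul_nodal hv] at hsplit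
  have hfξ : iteratedDerivWithin s.card f (Icc a b) ξ = s.card.factorial * c := by
    rw [← sub_eq_zero, ← hsplit]
    exact hξ0
  rw [hfξ, mul_div_cancel_left₀ _ (by positivity), div_mul_cancel₀ _ hW]

end Lagrange

theorem abs_sub_eval_interpolate_shiftedChebyshevNode_le {M : ℕ} {f : ℝ → ℝ} {K : ℝ}
    (hf : ContDiffOn ℝ M f (Icc 0 1))
    (hbound : ∀ ξ ∈ Icc (0 : ℝ) 1, |iteratedDerivWithin M f (Icc 0 1) ξ| ≤ K)
    {x : ℝ} (hx : x ∈ Icc 0 1) :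
    |f x - (Lagrange.interpolate (Finset.range M) (shiftedChebyshevNode M)
        (fun i => f (shiftedChebyshevNode M i))).eval x| ≤ K / (M.factorial * 2 ^ (2 * M - 1)) := by
  obtain ⟨ξ, hξ, heq⟩ := Lagrange.exists_sub_eval_interpolate_eq zero_lt_one
    (injOn_shiftedChebyshevNode M) (fun i _ => shiftedChebyshevNode_mem_Icc M i)
    (by simpa using hf) hx
  rw [Finset.card_range] at heq
  have hK : 0 ≤ K := (abs_nonneg _).trans (hbound ξ hξ)
  calc _ = |iteratedDerivWithin M f (Icc 0 1) ξ| / M.factorial *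
          |(Lagrange.nodal (Finset.range M) (shiftedChebyshevNode M)).eval x| := by
        rw [heq, abs_mul, abs_div, Nat.abs_cast]
    _ ≤ K / M.factorial * (1 / 2 ^ (2 * M - 1)) := by
        gcongr
        exacts [hbound ξ hξ, abs_eval_nodal_shiftedChebyshevNode_le M hx]
    _ = K / (M.factorial * 2 ^ (2 * M - 1)) := by rw [div_mul_div_comm, mul_one]

theorem sqrt_intervalIntegral_sq_le {a b C : ℝ} {g : ℝ → ℝ} (hC : 0 ≤ C)
    (hg : ∀ x ∈ uIoc a b, |g x| ≤ C) : √(∫ x in a..b, g x ^ 2) ≤ C * √|b - a| := by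
  have h := intervalIntegral.norm_integral_le_of_norm_le_const (f := fun x => g x ^ 2)
    (C := C ^ 2) fun x hx => by simpa [sq_abs] using pow_le_pow_left₀ (abs_nonneg _) (hg x hx) 2
  calc √(∫ x in a..b, g x ^ 2) ≤ √(C ^ 2 * |b - a|) := sqrt_le_sqrt ((le_abs_self _).trans h)
    _ = C * √|b - a| := by rw [sqrt_mul (sq_nonneg C), sqrt_sq hC]

theorem bernoulli_span_best_approx_general
    (M : ℕ) (f : ℝ → ℝ) (Mt : ℝ)
    (hf : ContDiffOn ℝ M f (Set.Icc 0 1))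
    (hbound : ∀ ξ ∈ Set.Icc (0:ℝ) 1, |iteratedDerivWithin M f (Set.Icc 0 1) ξ| ≤ Mt) :
    ∃ c : ℕ → ℝ,
      Real.sqrt (∫ ζ in (0:ℝ)..1,
          (f ζ - ∑ m ∈ Finset.range M,
            c m * ((Polynomial.bernoulli m).map (algebraMap ℚ ℝ)).eval ζ) ^ 2)
        ≤ Mt / (M.factorial * 2 ^ (2 * M - 1)) := by
  set P := Lagrange.interpolate (Finset.range M) (shiftedChebyshevNode M)
    (fun i => f (shiftedChebyshevNode M i))
  have hP : P.degree < M := by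
    simpa only [Finset.card_range] using
      Lagrange.degree_interpolate_lt _ (injOn_shiftedChebyshevNode M)
  obtain ⟨c, hc⟩ := exists_eval_eq_sum_bernoulli hP
  refine ⟨c, ?_⟩
  have hMt : 0 ≤ Mt := (abs_nonneg _).trans (hbound 0 ⟨le_rfl, zero_le_one⟩)
  have herr (x) (hx : x ∈ uIoc 0 1) :
      |f x - P.eval x| ≤ Mt / (M.factorial * 2 ^ (2 * M - 1)) :=
    abs_sub_eval_interpolate_shiftedChebyshevNode_le hf hbound
      (Ioc_subset_Icc_self (by simpa [uIoc_of_le zero_le_one] using hx))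
  simp only [← hc]
  simpa using sqrt_intervalIntegral_sq_le (by positivity) herr

/-- Single-level (`k = 1`) Bernoulli-wavelet best approximation: if `f` is `M` times
continuously differentiable on `[0,1]` with `sup |f^{(M)}| ≤ M̃`, then there are real
coefficients `c_0, …, c_{M-1}` with
`(∫_0^1 (f(ζ) - Σ_{m<M} c_m B_m(ζ))² dζ)^{1/2} ≤ M̃ / (M! · 2^(2M-1))`. -/
theorem bernoulli_span_best_approx
    (M : ℕ) (hM : 1 ≤ M) (f : ℝ → ℝ) (Mt : ℝ)
    (hf : ContDiffOn ℝ M f (Set.Icc 0 1))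
    (hbound : ∀ ξ ∈ Set.Icc (0:ℝ) 1, |iteratedDerivWithin M f (Set.Icc 0 1) ξ| ≤ Mt) :
    ∃ c : ℕ → ℝ,
      Real.sqrt (∫ ζ in (0:ℝ)..1,
          (f ζ - ∑ m ∈ Finset.range M,
            c m * ((Polynomial.bernoulli m).map (algebraMap ℚ ℝ)).eval ζ) ^ 2)
        ≤ Mt / (M.factorial * 2 ^ (2 * M - 1)) :=
  bernoulli_span_best_approx_general M f Mt hf hbound
end

section
/- Let k ≥ 1 and M ≥ 1 be integers and let f : [0,1] → ℝ be M times continuously differentiable with sup_{ξ∈[0,1]} |f^{(M)}(ξ)| ≤ M̃ for some real number M̃. Then there exists a function g : [0,1] → ℝ which, on each subinterval [(n−1)/2^{k−1}, n/2^{k−1}) for n = 1, …, 2^{k−1}, agrees with a polynomial of degree at most M−1, such that (∫_0^1 (f(ζ) − g(ζ))² dζ)^{1/2} ≤ (2^{1−k})^M · M̃ / (M! · 2^{2M−1}). -/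
/-!
On each piece `[j/N, (j+1)/N]`, `N = 2^(k-1)`, interpolate `f` at the `M` Chebyshev nodes of
the piece. Applying Rolle's theorem `M` times to `f` minus the interpolant minus a multiple of the
nodal polynomial `ω` gives the Lagrange remainder `f - p = f^(M)(c) / M! · ω`. The nodal
polynomial of the Chebyshev nodes is a rescaled `T_M / 2^(M-1)`, and `|T_M| ≤ 1` on `[-1, 1]`,
so `|ω| ≤ (1/(2N))^M / 2^(M-1)` on the piece. A uniform bound on `[0, 1]` bounds the `L²` norm.
-/

open Finset Polynomial Real
open Set (Icc Ioo Ico)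
open scoped Nat

section Polynomial

variable {𝕜 : Type*} [NontriviallyNormedField 𝕜]

theorem Polynomial.contDiff_eval (p : 𝕜[X]) (n : WithTop ℕ∞) :
    ContDiff 𝕜 n fun x => p.eval x := by
  simpa using p.contDiff_aeval (𝕜 := 𝕜) n

theorem Polynomial.iteratedDeriv_eval_s7 (p : 𝕜[X]) (n : ℕ) :
    iteratedDeriv n (fun x => p.eval x) = fun x => (derivative^[n] p).eval x := by
  induction n with
  | zero => simp
  | succ n ih =>
    funext x
    rw [iteratedDeriv_succ, ih, Function.iterate_succ_apply']
    exact Polynomial.deriv _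

theorem Polynomial.iteratedDerivWithin_eval {I : Set 𝕜} (hI : UniqueDiffOn 𝕜 I) (p : 𝕜[X])
    (n : ℕ) {x : 𝕜} (hx : x ∈ I) :
    iteratedDerivWithin n (fun x => p.eval x) I x = (derivative^[n] p).eval x := by
  rw [iteratedDerivWithin_eq_iteratedDeriv hI (p.contDiff_eval n).contDiffAt hx,
    p.iteratedDeriv_eval_s7]

theorem Lagrange.iterate_derivative_card_nodal {R : Type*} [CommRing R] (s : Finset R) :
    derivative^[#s] (Lagrange.nodal s id) = C ((#s)! : R) := by
  rw [Lagrange.nodal_eq, map_natCast C]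
  simpa using iterate_derivative_prod_X_sub_C (S := s) le_rfl

theorem Polynomial.natDegree_le_sub_one_of_degree_lt {R : Type*} [Semiring R] {p : R[X]}
    {n : ℕ} (h : p.degree < n) : p.natDegree ≤ n - 1 := by
  by_cases hp : p = 0
  · simp [hp]
  · have := (natDegree_lt_iff_degree_lt hp).mpr h
    omega

end Polynomial

noncomputable def chebyshevRoots (n : ℕ) : Finset ℝ :=
  (range n).image fun k : ℕ => cos ((2 * k + 1) * π / (2 * n))

theorem card_chebyshevRoots (n : ℕ) : #(chebyshevRoots n) = n := by
  rw [chebyshevRoots, card_image_of_injOn, card_range]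
  exact (range n).nodup_map_iff_injOn.mp (Chebyshev.roots_T_real_nodup n)

theorem chebyshevRoots_subset_Icc (n : ℕ) : ↑(chebyshevRoots n) ⊆ Icc (-1 : ℝ) 1 := by
  intro x hx
  obtain ⟨k, -, rfl⟩ := Finset.mem_image.mp hx
  exact ⟨neg_one_le_cos _, cos_le_one _⟩

theorem abs_prod_sub_chebyshevRoots_le (n : ℕ) {u : ℝ} (hu : u ∈ Icc (-1 : ℝ) 1) :
    |∏ x ∈ chebyshevRoots n, (u - x)| ≤ 1 / 2 ^ (n - 1) := by
  have hroots : (Chebyshev.T ℝ n).roots = (chebyshevRoots n).val := Chebyshev.roots_T_real n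
  have hsplit := C_leadingCoeff_mul_prod_multiset_X_sub_C (p := Chebyshev.T ℝ n)
    (by rw [hroots, Chebyshev.natDegree_T]; exact card_chebyshevRoots n)
  have heval := congrArg (eval u) hsplit
  rw [eval_mul, eval_C, eval_multiset_prod, Multiset.map_map, Chebyshev.leadingCoeff_T, hroots]
    at heval
  have hprod : ∏ x ∈ chebyshevRoots n, (u - x) = (Chebyshev.T ℝ n).eval u / 2 ^ (n - 1) := by
    rw [← heval, Int.natAbs_natCast, mul_div_cancel_left₀ _ (by positivity),
      prod_eq_multiset_prod]
    simp
  rw [hprod, abs_div, abs_of_pos (by positivity : (0 : ℝ) < 2 ^ (n - 1))]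
  gcongr
  exact Chebyshev.abs_eval_T_real_le_one n (abs_le.mpr hu)

noncomputable def chebyshevNodes (a b : ℝ) (n : ℕ) : Finset ℝ :=
  (chebyshevRoots n).image fun r => (a + b) / 2 + (b - a) / 2 * r

section chebyshevNodes

variable {a b : ℝ}

theorem injective_chebyshevNodes_map (hab : a < b) :
    Function.Injective fun r : ℝ => (a + b) / 2 + (b - a) / 2 * r :=
  (add_right_injective _).comp (mul_right_injective₀ (by linarith))

theorem card_chebyshevNodes (hab : a < b) (n : ℕ) : #(chebyshevNodes a b n) = n := by
  rw [chebyshevNodes, card_image_of_injective _ (injective_chebyshevNodes_map hab),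
    card_chebyshevRoots]

theorem chebyshevNodes_subset_Icc (hab : a ≤ b) (n : ℕ) :
    ↑(chebyshevNodes a b n) ⊆ Icc a b := by
  intro x hx
  obtain ⟨r, hr, rfl⟩ := Finset.mem_image.mp hx
  obtain ⟨hr₁, hr₂⟩ := chebyshevRoots_subset_Icc n hr
  constructor <;> nlinarith

theorem abs_prod_sub_chebyshevNodes_le (hab : a < b) (n : ℕ) {y : ℝ} (hy : y ∈ Icc a b) :
    |∏ x ∈ chebyshevNodes a b n, (y - x)| ≤ ((b - a) / 2) ^ n / 2 ^ (n - 1) := by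
  set u := (2 * y - (a + b)) / (b - a)
  have hba : b - a ≠ 0 := by linarith
  have hu : u ∈ Icc (-1 : ℝ) 1 := by
    constructor
    · rw [le_div_iff₀ (by linarith)]; linarith [hy.1]
    · rw [div_le_iff₀ (by linarith)]; linarith [hy.2]
  have hfactor : ∀ r, y - ((a + b) / 2 + (b - a) / 2 * r) = (b - a) / 2 * (u - r) := by
    intro r
    simp only [u]
    field_simp
    ring
  rw [chebyshevNodes, prod_image fun r _ r' _ h => injective_chebyshevNodes_map hab h]
  simp only [hfactor, prod_mul_distrib, prod_const, card_chebyshevRoots, abs_mul, abs_pow,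
    abs_of_pos (by linarith : 0 < (b - a) / 2)]
  rw [div_eq_mul_one_div _ (2 ^ (n - 1) : ℝ)]
  gcongr
  exact abs_prod_sub_chebyshevRoots_le n hu

end chebyshevNodes

namespace Set.OrdConnected

variable {I : Set ℝ} (hI : I.OrdConnected)
include hI

theorem exists_finset_derivWithin_eq_zero {f : ℝ → ℝ} (hf : ContinuousOn f I) {s : Finset ℝ}
    (hsI : ↑s ⊆ I) (hs : ∀ x ∈ s, f x = 0) :
    ∃ t : Finset ℝ, ↑t ⊆ I ∧ #s ≤ #t + 1 ∧ ∀ z ∈ t, derivWithin f I z = 0 := by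
  -- Stated for every pair, so that `choose` gives a total function.
  have hRolle : ∀ p : ℝ × ℝ, ∃ z, p ∈ s ×ˢ s → p.1 < p.2 →
      z ∈ Ioo p.1 p.2 ∧ derivWithin f I z = 0 := by
    rintro ⟨x, y⟩
    by_cases h : (x, y) ∈ s ×ˢ s ∧ x < y
    · obtain ⟨hxy_mem, hxy⟩ := h
      obtain ⟨hx, hy⟩ := mem_product.mp hxy_mem
      have hIcc : Icc x y ⊆ I := hI.out (hsI hx) (hsI hy)
      obtain ⟨z, hz, hz0⟩ :=
        exists_deriv_eq_zero hxy (hf.mono hIcc) ((hs x hx).trans (hs y hy).symm)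
      have hIz : I ∈ nhds z :=
        Filter.mem_of_superset (Ioo_mem_nhds hz.1 hz.2) (Ioo_subset_Icc_self.trans hIcc)
      exact ⟨z, fun _ _ => ⟨hz, (derivWithin_of_mem_nhds hIz).trans hz0⟩⟩
    · exact ⟨0, fun hp hxy => absurd ⟨hp, hxy⟩ h⟩
  choose mid hmid using hRolle
  set pairs := (s ×ˢ s).filter fun p => p.1 < p.2
  have hpairs : ∀ p ∈ pairs, mid p ∈ Ioo p.1 p.2 ∧ derivWithin f I (mid p) = 0 :=
    fun p hp => hmid p (mem_filter.mp hp).1 (mem_filter.mp hp).2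
  refine ⟨pairs.image mid, ?_, ?_, ?_⟩
  · simp only [coe_image, image_subset_iff]
    intro p hp
    obtain ⟨hx, hy⟩ := mem_product.mp (mem_filter.mp hp).1
    exact hI.out (hsI hx) (hsI hy) (Ioo_subset_Icc_self (hpairs p hp).1)
  · refine (card_le_sdiff_of_interleaved (t := pairs.image mid)
      fun x hx y hy hxy _ => ?_).trans
      (add_le_add_left (Finset.card_le_card Finset.sdiff_subset) 1)
    have hp : (x, y) ∈ pairs := mem_filter.mpr ⟨mem_product.mpr ⟨hx, hy⟩, hxy⟩
    exact ⟨mid (x, y), Finset.mem_image_of_mem mid hp, (hpairs _ hp).1⟩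
  · rintro _ hz
    obtain ⟨p, hp, rfl⟩ := Finset.mem_image.mp hz
    exact (hpairs p hp).2

theorem exists_finset_iteratedDerivWithin_eq_zero {f : ℝ → ℝ} {n : ℕ}
    (hf : ∀ j < n, ContinuousOn (iteratedDerivWithin j f I) I) {s : Finset ℝ}
    (hsI : ↑s ⊆ I) (hs : ∀ x ∈ s, f x = 0) :
    ∃ t : Finset ℝ, ↑t ⊆ I ∧ #s ≤ #t + n ∧
      ∀ z ∈ t, iteratedDerivWithin n f I z = 0 := by
  induction n with
  | zero => exact ⟨s, hsI, le_rfl, by simpa using hs⟩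
  | succ n ih =>
    obtain ⟨t, htI, hst, ht⟩ := ih fun j hj => hf j (by omega)
    obtain ⟨t', ht'I, htt', ht'⟩ :=
      exists_finset_derivWithin_eq_zero hI (hf n n.lt_succ_self) htI ht
    refine ⟨t', ht'I, by omega, fun z hz => ?_⟩
    rw [iteratedDerivWithin_succ]
    exact ht' z hz

theorem exists_iteratedDerivWithin_eq_zero {f : ℝ → ℝ} {n : ℕ}
    (hf : ∀ j < n, ContinuousOn (iteratedDerivWithin j f I) I) {s : Finset ℝ}
    (hsI : ↑s ⊆ I) (hs : ∀ x ∈ s, f x = 0) (hn : n < #s) :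
    ∃ c ∈ I, iteratedDerivWithin n f I c = 0 := by
  obtain ⟨t, htI, hst, ht⟩ := exists_finset_iteratedDerivWithin_eq_zero hI hf hsI hs
  obtain ⟨c, hc⟩ := card_pos.mp (by omega : 0 < #t)
  exact ⟨c, htI hc, ht c hc⟩

theorem exists_sub_eval_interpolate_eq (hIu : UniqueDiffOn ℝ I) {s : Finset ℝ} {f : ℝ → ℝ}
    (hf : ContDiffOn ℝ #s f I) (hsI : ↑s ⊆ I) {y : ℝ} (hy : y ∈ I) :
    ∃ c ∈ I, f y - (Lagrange.interpolate s id f).eval y =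
      iteratedDerivWithin #s f I c / (#s)! * (Lagrange.nodal s id).eval y := by
  set n := #s
  set p := Lagrange.interpolate s id f
  set ω := Lagrange.nodal s id
  by_cases hys : y ∈ s
  · refine ⟨y, hy, ?_⟩
    rw [show y = id y from rfl, Lagrange.eval_interpolate_at_node f (Set.injOn_id _) hys,
      Lagrange.eval_nodal_at_node hys]
    simp
  have hωy : ω.eval y ≠ 0 := Lagrange.eval_nodal_not_at_node fun x hx h => hys (h ▸ hx)
  -- `q` interpolates `f` at the `n + 1` points of `insert y s`; its `n`-th derivative is `n! λ`.
  set lam := (f y - p.eval y) / ω.eval y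
  set q := p + C lam * ω
  have hzero : ∀ x ∈ insert y s, f x - q.eval x = 0 := by
    intro x hx
    rcases Finset.mem_insert.mp hx with rfl | hx
    · simp only [q, lam, eval_add, eval_mul, eval_C]
      field_simp
      ring
    · simp only [q, eval_add, eval_mul, eval_C]
      rw [show x = id x from rfl, Lagrange.eval_interpolate_at_node f (Set.injOn_id _) hx,
        Lagrange.eval_nodal_at_node hx, mul_zero, add_zero]
      exact sub_self _
  have hG : ContDiffOn ℝ n (fun x => f x - q.eval x) I := hf.sub (q.contDiff_eval n).contDiffOn
  obtain ⟨c, hc, hc0⟩ := exists_iteratedDerivWithin_eq_zero hI (n := n)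
    (fun j hj => hG.continuousOn_iteratedDerivWithin (by exact_mod_cast hj.le) hIu)
    (Finset.coe_insert y s ▸ Set.insert_subset hy hsI) hzero
    (by rw [Finset.card_insert_of_notMem hys]; omega)
  have hq : derivative^[n] q = C (n ! * lam) := by
    have hp : derivative^[n] p = 0 :=
      iterate_derivative_eq_zero_of_degree_lt (Lagrange.degree_interpolate_lt _ (Set.injOn_id _))
    rw [iterate_map_add, iterate_derivative_C_mul, hp, Lagrange.iterate_derivative_card_nodal,
      zero_add, ← C_mul, mul_comm]
  have hder : iteratedDerivWithin n (fun x => f x - q.eval x) I c =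
      iteratedDerivWithin n f I c - n ! * lam := by
    rw [← Pi.sub_def,
      iteratedDerivWithin_sub hc hIu (hf c hc) (q.contDiff_eval n).contDiffWithinAt,
      q.iteratedDerivWithin_eval hIu n hc, hq, eval_C]
  refine ⟨c, hc, ?_⟩
  rw [hder, sub_eq_zero] at hc0
  rw [hc0, mul_div_cancel_left₀ _ (by positivity)]
  exact (div_mul_cancel₀ _ hωy).symm

theorem exists_natDegree_le_abs_sub_eval_le (hIu : UniqueDiffOn ℝ I) {n : ℕ} {f : ℝ → ℝ}
    (hf : ContDiffOn ℝ n f I) {K : ℝ} (hK : ∀ x ∈ I, |iteratedDerivWithin n f I x| ≤ K)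
    {a b : ℝ} (hab : a < b) (habI : Icc a b ⊆ I) :
    ∃ p : ℝ[X], p.natDegree ≤ n - 1 ∧
      ∀ y ∈ Icc a b, |f y - p.eval y| ≤ K / n ! * (((b - a) / 2) ^ n / 2 ^ (n - 1)) := by
  set s := chebyshevNodes a b n
  have hcard : #s = n := card_chebyshevNodes hab n
  have hsI : ↑s ⊆ I := (chebyshevNodes_subset_Icc hab.le n).trans habI
  refine ⟨Lagrange.interpolate s id f, natDegree_le_sub_one_of_degree_lt ?_, fun y hy => ?_⟩
  · exact hcard ▸ Lagrange.degree_interpolate_lt _ (Set.injOn_id _)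
  obtain ⟨c, hc, hrem⟩ := exists_sub_eval_interpolate_eq hI hIu (hcard ▸ hf) hsI (habI hy)
  rw [hrem, hcard, abs_mul, abs_div, Nat.abs_cast, Lagrange.eval_nodal]
  have hK0 : 0 ≤ K := (abs_nonneg _).trans (hK c hc)
  gcongr
  · exact hK c hc
  · exact abs_prod_sub_chebyshevNodes_le hab n hy

end Set.OrdConnected

/-- The `min` puts `ζ = 1` into the last piece `[(N-1)/N, 1]`. -/
noncomputable def pieceIndex (N : ℕ) (ζ : ℝ) : ℕ := min ⌊ζ * N⌋₊ (N - 1)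

theorem pieceIndex_lt {N : ℕ} (hN : 0 < N) (ζ : ℝ) : pieceIndex N ζ < N := by
  unfold pieceIndex; omega

theorem pieceIndex_eq_of_mem_Ico {N n : ℕ} (hn : n ∈ Finset.Icc 1 N) {ζ : ℝ}
    (hζ : ζ ∈ Ico (((n : ℝ) - 1) / N) (n / N)) : pieceIndex N ζ = n - 1 := by
  obtain ⟨hn₁, hnN⟩ := Finset.mem_Icc.mp hn
  have hN : (0 : ℝ) < N := by exact_mod_cast hn₁.trans hnN
  have hcast : ((n - 1 : ℕ) : ℝ) = n - 1 := by push_cast [hn₁]; ring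
  rw [Set.mem_Ico, div_le_iff₀ hN, lt_div_iff₀ hN] at hζ
  have hfloor : ⌊ζ * N⌋₊ = n - 1 := by
    rw [Nat.floor_eq_iff (by nlinarith [(by exact_mod_cast hn₁ : (1 : ℝ) ≤ n)]), hcast]
    constructor <;> linarith
  unfold pieceIndex
  omega

theorem mem_Icc_pieceIndex {N : ℕ} (hN : 0 < N) {ζ : ℝ} (hζ : ζ ∈ Icc (0 : ℝ) 1) :
    ζ ∈ Icc ((pieceIndex N ζ : ℝ) / N) ((pieceIndex N ζ + 1) / N) := by
  have hN' : (0 : ℝ) < N := by exact_mod_cast hN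
  have hζN : 0 ≤ ζ * N := mul_nonneg hζ.1 hN'.le
  rw [Set.mem_Icc, div_le_iff₀ hN', le_div_iff₀ hN']
  constructor
  · calc (pieceIndex N ζ : ℝ) ≤ ⌊ζ * N⌋₊ := by exact_mod_cast min_le_left _ _
      _ ≤ ζ * N := Nat.floor_le hζN
  · rcases le_total ⌊ζ * N⌋₊ (N - 1) with h | h
    · rw [pieceIndex, min_eq_left h]
      exact (Nat.lt_floor_add_one _).le
    · rw [pieceIndex, min_eq_right h, Nat.cast_sub hN, Nat.cast_one, sub_add_cancel]
      nlinarith [hζ.2]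

theorem exists_piecewise_natDegree_le_abs_sub_eval_le {n : ℕ} {f : ℝ → ℝ}
    (hf : ContDiffOn ℝ n f (Icc 0 1)) {K : ℝ}
    (hK : ∀ x ∈ Icc (0 : ℝ) 1, |iteratedDerivWithin n f (Icc 0 1) x| ≤ K)
    {N : ℕ} (hN : 0 < N) :
    ∃ P : ℕ → ℝ[X], ∀ j < N, (P j).natDegree ≤ n - 1 ∧
      ∀ y ∈ Icc ((j : ℝ) / N) ((j + 1) / N),
        |f y - (P j).eval y| ≤ K / n ! * ((1 / N / 2) ^ n / 2 ^ (n - 1)) := by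
  have hN' : (0 : ℝ) < N := by exact_mod_cast hN
  have hpiece : ∀ j < N, ∃ p : ℝ[X], p.natDegree ≤ n - 1 ∧
      ∀ y ∈ Icc ((j : ℝ) / N) ((j + 1) / N),
        |f y - p.eval y| ≤ K / n ! * ((1 / N / 2) ^ n / 2 ^ (n - 1)) := by
    intro j hj
    have hlen : ((j : ℝ) + 1) / N - j / N = 1 / N := by field_simp; ring
    have hsub : Icc ((j : ℝ) / N) ((j + 1) / N) ⊆ Icc 0 1 :=
      Set.Icc_subset_Icc (by positivity) ((div_le_one hN').mpr (by exact_mod_cast hj))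
    simpa only [hlen] using Set.ordConnected_Icc.exists_natDegree_le_abs_sub_eval_le
      (uniqueDiffOn_Icc zero_lt_one) hf hK (by gcongr; linarith) hsub
  choose! P hP using hpiece
  exact ⟨P, hP⟩

theorem sqrt_intervalIntegral_sq_le_s7 {h : ℝ → ℝ} {a b E : ℝ} (hab : a ≤ b)
    (hE : ∀ x ∈ Icc a b, |h x| ≤ E) : √(∫ x in a..b, h x ^ 2) ≤ E * √(b - a) := by
  have hE0 : 0 ≤ E := (abs_nonneg _).trans (hE a ⟨le_rfl, hab⟩)
  have hint : ∫ x in a..b, h x ^ 2 ≤ (b - a) * E ^ 2 := by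
    by_cases hi : IntervalIntegrable (fun x => h x ^ 2) MeasureTheory.volume a b
    · calc ∫ x in a..b, h x ^ 2 ≤ ∫ _ in a..b, E ^ 2 :=
            intervalIntegral.integral_mono_on hab hi intervalIntegrable_const fun x hx =>
              sq_abs (h x) ▸ pow_le_pow_left₀ (abs_nonneg _) (hE x hx) 2
        _ = (b - a) * E ^ 2 := by simp
    · rw [intervalIntegral.integral_undef hi]
      nlinarith
  calc √(∫ x in a..b, h x ^ 2) ≤ √((b - a) * E ^ 2) := Real.sqrt_le_sqrt hint
    _ = E * √(b - a) := by rw [Real.sqrt_mul (by linarith), Real.sqrt_sq hE0, mul_comm]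

theorem one_div_two_pow_pred_le_zpow (k : ℕ) :
    (1 : ℝ) / 2 ^ (k - 1) ≤ 2 ^ ((1 : ℤ) - k) := by
  rw [zpow_sub₀ two_ne_zero, zpow_one, zpow_natCast,
    div_le_div_iff₀ (by positivity) (by positivity)]
  calc (1 : ℝ) * 2 ^ k ≤ 2 ^ (k - 1 + 1) := by
        rw [one_mul]; exact pow_le_pow_right₀ one_le_two (by omega)
    _ = 2 * 2 ^ (k - 1) := by ring

theorem wavelet_best_approx_general
    (k M : ℕ) (f : ℝ → ℝ) (Mt : ℝ)
    (hf : ContDiffOn ℝ M f (Set.Icc 0 1))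
    (hbound : ∀ ξ ∈ Set.Icc (0:ℝ) 1, |iteratedDerivWithin M f (Set.Icc 0 1) ξ| ≤ Mt) :
    ∃ g : ℝ → ℝ,
      (∀ n ∈ Finset.Icc (1 : ℕ) (2 ^ (k - 1)), ∃ p : Polynomial ℝ, p.natDegree ≤ M - 1 ∧
        ∀ ζ ∈ Set.Ico (((n : ℝ) - 1) / 2 ^ (k - 1)) ((n : ℝ) / 2 ^ (k - 1)),
          g ζ = p.eval ζ) ∧
      Real.sqrt (∫ ζ in (0:ℝ)..1, (f ζ - g ζ) ^ 2)
        ≤ ((2 : ℝ) ^ ((1 : ℤ) - (k : ℤ))) ^ M * Mt / (M.factorial * 2 ^ (2 * M - 1)) := by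
  set N := 2 ^ (k - 1)
  have hN : 0 < N := by positivity
  have hNr : (N : ℝ) = 2 ^ (k - 1) := by push_cast [N]; rfl
  have hMt : 0 ≤ Mt := (abs_nonneg _).trans (hbound 0 ⟨le_rfl, zero_le_one⟩)
  obtain ⟨P, hP⟩ := exists_piecewise_natDegree_le_abs_sub_eval_le hf hbound hN
  refine ⟨fun ζ => (P (pieceIndex N ζ)).eval ζ,
    fun n hn => ⟨P (n - 1), ?_, fun ζ hζ => ?_⟩, ?_⟩
  · exact (hP _ (by have := Finset.mem_Icc.mp hn; omega)).1
  · rw [← hNr] at hζ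
    simp only [pieceIndex_eq_of_mem_Ico hn hζ]
  calc √(∫ ζ in (0 : ℝ)..1, (f ζ - (P (pieceIndex N ζ)).eval ζ) ^ 2)
      ≤ Mt / M ! * ((1 / N / 2) ^ M / 2 ^ (M - 1)) * √(1 - 0) :=
        sqrt_intervalIntegral_sq_le_s7 zero_le_one fun ζ hζ =>
          (hP _ (pieceIndex_lt hN ζ)).2 ζ (mem_Icc_pieceIndex hN hζ)
    _ ≤ Mt / M ! * ((2 ^ ((1 : ℤ) - k) / 2) ^ M / 2 ^ (M - 1)) := by
        rw [sub_zero, Real.sqrt_one, mul_one, hNr]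
        gcongr
        exact one_div_two_pow_pred_le_zpow k
    _ = ((2 : ℝ) ^ ((1 : ℤ) - (k : ℤ))) ^ M * Mt / (M.factorial * 2 ^ (2 * M - 1)) := by
        rw [show 2 * M - 1 = M + (M - 1) by omega, pow_add, div_pow]
        field_simp

/-- Multi-level Bernoulli-wavelet best approximation: if `f` is `M` times continuously
differentiable on `[0,1]` with `sup |f^{(M)}| ≤ M̃`, then there is a function `g` that
agrees with a polynomial of degree at most `M-1` on each dyadic subinterval
`[(n-1)/2^(k-1), n/2^(k-1))`, `n = 1, …, 2^(k-1)`, and satisfies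
`(∫_0^1 (f - g)²)^{1/2} ≤ (2^(1-k))^M · M̃ / (M! · 2^(2M-1))`. -/
theorem wavelet_best_approx
    (k M : ℕ) (hk : 1 ≤ k) (hM : 1 ≤ M) (f : ℝ → ℝ) (Mt : ℝ)
    (hf : ContDiffOn ℝ M f (Set.Icc 0 1))
    (hbound : ∀ ξ ∈ Set.Icc (0:ℝ) 1, |iteratedDerivWithin M f (Set.Icc 0 1) ξ| ≤ Mt) :
    ∃ g : ℝ → ℝ,
      (∀ n ∈ Finset.Icc (1 : ℕ) (2 ^ (k - 1)), ∃ p : Polynomial ℝ, p.natDegree ≤ M - 1 ∧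
        ∀ ζ ∈ Set.Ico (((n : ℝ) - 1) / 2 ^ (k - 1)) ((n : ℝ) / 2 ^ (k - 1)),
          g ζ = p.eval ζ) ∧
      Real.sqrt (∫ ζ in (0:ℝ)..1, (f ζ - g ζ) ^ 2)
        ≤ ((2 : ℝ) ^ ((1 : ℤ) - (k : ℤ))) ^ M * Mt / (M.factorial * 2 ^ (2 * M - 1)) :=
  wavelet_best_approx_general k M f Mt hf hbound
end
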